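/- Let L ∈ {Λ, Λ_sp} and let C ⊆ G_L(s,t) be a complete set of L-generalizations of s = λx:α.λy:α. f(x) and t = λx:α.λy:α. f(y). Then C contains an L-pattern-derived generalization, i.e., some g ∈ C with λx:α.λy:α. f(Z(x,y)) ≤_L g. -/

import Mathlib

/-!
Anti-unification over the simply-typed lambda calculus (Cerna & Buran).

We fix one base type `α` (`Ty.base`) and a signature that contains, for every
simple type `τ`, constants `Tm.const n τ` (so in particular a constant
`f : α → α`, namely `fC = Tm.const 0 (α → α)`).  Terms use de Bruijn indices
for bound variables (so `=_α` is definitional) and named, type-annotated free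
variables.  Substitutions are type-preserving finite maps from free variables
to (locally closed) terms; since the terms in their range are locally closed,
application of a substitution is automatically capture-avoiding.
-/

namespace AU

inductive Ty : Type where
  | base : Ty
  | arr : Ty → Ty → Ty
deriving DecidableEq

inductive Tm : Type where
  | bvar : ℕ → Tm
  | fvar : ℕ → Ty → Tm
  | const : ℕ → Ty → Tm
  | lam : Ty → Tm → Tm
  | app : Tm → Tm → Tm
deriving DecidableEq

/-- `mkArrow [γ₁,…,γₘ] ρ = γ₁ → ⋯ → γₘ → ρ`. -/
def mkArrow : List Ty → Ty → Ty
  | [], ρ => ρ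
  | τ :: rest, ρ => Ty.arr τ (mkArrow rest ρ)

/-- Shift de Bruijn indices `≥ c` up by `d`. -/
def shift (d : ℕ) : ℕ → Tm → Tm
  | c, Tm.bvar i => if i < c then Tm.bvar i else Tm.bvar (i + d)
  | _, Tm.fvar n τ => Tm.fvar n τ
  | _, Tm.const n τ => Tm.const n τ
  | c, Tm.lam τ t => Tm.lam τ (shift d (c + 1) t)
  | c, Tm.app t u => Tm.app (shift d c t) (shift d c u)

/-- Substitute `u` for the bound variable `k` in `t` (for β-reduction). -/
def bsubst : Tm → ℕ → Tm → Tm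
  | Tm.bvar i, k, u => if i = k then u else if k < i then Tm.bvar (i - 1) else Tm.bvar i
  | Tm.fvar n τ, _, _ => Tm.fvar n τ
  | Tm.const n τ, _, _ => Tm.const n τ
  | Tm.lam τ t, k, u => Tm.lam τ (bsubst t (k + 1) (shift 1 0 u))
  | Tm.app a b, k, u => Tm.app (bsubst a k u) (bsubst b k u)

/-- Simple typing. Free variables and constants carry their type. -/
inductive HasType : List Ty → Tm → Ty → Prop where
  | bvar {Γ i τ} : Γ[i]? = some τ → HasType Γ (Tm.bvar i) τ
  | fvar {Γ n τ} : HasType Γ (Tm.fvar n τ) τ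
  | const {Γ n τ} : HasType Γ (Tm.const n τ) τ
  | lam {Γ τ ρ t} : HasType (τ :: Γ) t ρ → HasType Γ (Tm.lam τ t) (Ty.arr τ ρ)
  | app {Γ t u τ ρ} : HasType Γ t (Ty.arr τ ρ) → HasType Γ u τ → HasType Γ (Tm.app t u) ρ

/-- `=_{αβη}`: equality modulo α (definitional), β and η. -/
inductive AbeEq : Tm → Tm → Prop where
  | refl (t) : AbeEq t t
  | symm {t u} : AbeEq t u → AbeEq u t
  | trans {t u v} : AbeEq t u → AbeEq u v → AbeEq t v
  | beta (τ t u) : AbeEq (Tm.app (Tm.lam τ t) u) (bsubst t 0 u)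
  | eta (τ t) : AbeEq (Tm.lam τ (Tm.app (shift 1 0 t) (Tm.bvar 0))) t
  | lam {τ t u} : AbeEq t u → AbeEq (Tm.lam τ t) (Tm.lam τ u)
  | app {t t' u u'} : AbeEq t t' → AbeEq u u' → AbeEq (Tm.app t u) (Tm.app t' u')

/-- One step of η-reduction (congruent closure). -/
inductive EtaStep : Tm → Tm → Prop where
  | eta (τ t) : EtaStep (Tm.lam τ (Tm.app (shift 1 0 t) (Tm.bvar 0))) t
  | lam {τ t u} : EtaStep t u → EtaStep (Tm.lam τ t) (Tm.lam τ u)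
  | appL {t t' u} : EtaStep t t' → EtaStep (Tm.app t u) (Tm.app t' u)
  | appR {t u u'} : EtaStep u u' → EtaStep (Tm.app t u) (Tm.app t u')

def EtaRed : Tm → Tm → Prop := Relation.ReflTransGen EtaStep
def EtaNormal (t : Tm) : Prop := ∀ u, ¬ EtaStep t u
/-- `IsEtaNF t t'` : `t'` is the η-normal form `t↓_η` of `t`. -/
def IsEtaNF (t t' : Tm) : Prop := EtaRed t t' ∧ EtaNormal t'

inductive BetaStep : Tm → Tm → Prop where
  | beta (τ t u) : BetaStep (Tm.app (Tm.lam τ t) u) (bsubst t 0 u)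
  | lam {τ t u} : BetaStep t u → BetaStep (Tm.lam τ t) (Tm.lam τ u)
  | appL {t t' u} : BetaStep t t' → BetaStep (Tm.app t u) (Tm.app t' u)
  | appR {t u u'} : BetaStep u u' → BetaStep (Tm.app t u) (Tm.app t u')

def BetaEtaStep (t u : Tm) : Prop := BetaStep t u ∨ EtaStep t u
def BetaEtaRed : Tm → Tm → Prop := Relation.ReflTransGen BetaEtaStep
def BetaEtaNormal (t : Tm) : Prop := ∀ u, ¬ BetaEtaStep t u

/-- The head of a term: `head (λx.t) = λx.`, `head (h(s₁,…,sₘ)) = h`. -/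
inductive Head : Type where
  | lam : Ty → Head
  | bvar : ℕ → Head
  | fvar : ℕ → Ty → Head
  | const : ℕ → Ty → Head
deriving DecidableEq

def headOf : Tm → Head
  | Tm.bvar i => Head.bvar i
  | Tm.fvar n τ => Head.fvar n τ
  | Tm.const n τ => Head.const n τ
  | Tm.lam τ _ => Head.lam τ
  | Tm.app t _ => headOf t

/-- Number of occurrences of the free variable `(n : τ)` in a term. -/
def occFV (n : ℕ) (τ : Ty) : Tm → ℕ
  | Tm.bvar _ => 0
  | Tm.fvar m ρ => if m = n ∧ ρ = τ then 1 else 0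
  | Tm.const _ _ => 0
  | Tm.lam _ t => occFV n τ t
  | Tm.app a b => occFV n τ a + occFV n τ b

/-- A term containing no free variables (ground). -/
def NoFV : Tm → Prop
  | Tm.bvar _ => True
  | Tm.fvar _ _ => False
  | Tm.const _ _ => True
  | Tm.lam _ t => NoFV t
  | Tm.app a b => NoFV a ∧ NoFV b

/-- A strict upper bound on the names of free variables occurring in a term. -/
def fvBound : Tm → ℕ
  | Tm.bvar _ => 0
  | Tm.fvar n _ => n + 1
  | Tm.const _ _ => 0
  | Tm.lam _ t => fvBound t
  | Tm.app a b => max (fvBound a) (fvBound b)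

/-- Apply a (total) map from free variables to terms. -/
def applyMap (σ : ℕ → Ty → Tm) : Tm → Tm
  | Tm.bvar i => Tm.bvar i
  | Tm.fvar n τ => σ n τ
  | Tm.const n τ => Tm.const n τ
  | Tm.lam τ t => Tm.lam τ (applyMap σ t)
  | Tm.app a b => Tm.app (applyMap σ a) (applyMap σ b)

/-- A substitution: a type-preserving map from free variables to locally
closed terms, equal to the identity outside a finite domain.  Since the terms
in its range are locally closed, application is capture-avoiding. -/
structure Subst where
  map : ℕ → Ty → Tm
  wt : ∀ n τ, HasType [] (map n τ) τ
  fin : {p : ℕ × Ty | map p.1 p.2 ≠ Tm.fvar p.1 p.2}.Finite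

def Subst.apply (σ : Subst) (t : Tm) : Tm := applyMap σ.map t

def idSubst : Subst where
  map := fun n τ => Tm.fvar n τ
  wt := fun _ _ => HasType.fvar
  fin := by
    have h : {p : ℕ × Ty | Tm.fvar p.1 p.2 ≠ Tm.fvar p.1 p.2} = ∅ := by ext p; simp
    rw [h]; exact Set.finite_empty

def Subst.update (σ : Subst) (n : ℕ) (τ : Ty) (u : Tm) (hu : HasType [] u τ) : Subst where
  map := fun m ρ => if m = n ∧ ρ = τ then u else σ.map m ρ
  wt := by
    intro m ρ
    try dsimp only
    by_cases h : m = n ∧ ρ = τ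
    · rw [if_pos h]
      obtain ⟨-, rfl⟩ := h
      exact hu
    · rw [if_neg h]; exact σ.wt m ρ
  fin := by
    apply (σ.fin.insert (n, τ)).subset
    intro p hp
    simp only [Set.mem_setOf_eq] at hp
    by_cases h : p = (n, τ)
    · exact h ▸ Set.mem_insert _ _
    · have hne : ¬ (p.1 = n ∧ p.2 = τ) := by
        intro hc
        apply h
        cases p
        exact Prod.ext hc.1 hc.2
      rw [if_neg hne] at hp
      exact Set.mem_insert_of_mem _ hp

/-- A ground substitution: terms in its range contain no free variables. -/
def Subst.Ground (σ : Subst) : Prop :=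
  ∀ n τ, σ.map n τ ≠ Tm.fvar n τ → NoFV (σ.map n τ)

/-- The base type `α`, the types `α → α` and `α → α → α`. -/
def tyFF : Ty := Ty.arr Ty.base Ty.base
def ty2 : Ty := Ty.arr Ty.base (Ty.arr Ty.base Ty.base)

/-- The constant `f : α → α`. -/
def fC : Tm := Tm.const 0 tyFF

/-- `s = λx:α.λy:α. f(x)`. -/
def sTerm : Tm := Tm.lam Ty.base (Tm.lam Ty.base (Tm.app fC (Tm.bvar 1)))
/-- `t = λx:α.λy:α. f(y)`. -/
def tTerm : Tm := Tm.lam Ty.base (Tm.lam Ty.base (Tm.app fC (Tm.bvar 0)))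

/-- `appList h [s₁,…,sₘ] = h s₁ … sₘ`. -/
def appList (h : Tm) (args : List Tm) : Tm := args.foldl Tm.app h
/-- `mkLams [τ₁,…,τₘ] t = λb₁:τ₁…λbₘ:τₘ. t`. -/
def mkLams (τs : List Ty) (t : Tm) : Tm := τs.foldr Tm.lam t
/-- `appBVars h m = h bₘ₋₁ … b₀` : apply `h` to the `m` innermost binders. -/
def appBVars (h : Tm) (m : ℕ) : Tm :=
  ((List.range m).reverse).foldl (fun acc i => Tm.app acc (Tm.bvar i)) h

inductive SubtermOf : Tm → Tm → Prop where
  | refl (t) : SubtermOf t t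
  | lam {u τ t} : SubtermOf u t → SubtermOf u (Tm.lam τ t)
  | appL {u t v} : SubtermOf u t → SubtermOf u (Tm.app t v)
  | appR {u t v} : SubtermOf u v → SubtermOf u (Tm.app t v)

/-- The η-normal form of an argument of a free variable in a superpattern is a
bound variable or has a free-variable head. -/
def ArgOK (s : Tm) : Prop :=
  ∀ s', IsEtaNF s s' →
    (∃ i, s' = Tm.bvar i) ∨ (∃ n ρ, headOf s' = Head.fvar n ρ)

/-- Superpatterns (Definition `superpattern`): for every subterm occurrence
`X(s₁,…,sₘ)` headed by a free variable, every argument is (in η-normal form)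
a bound variable or free-variable-headed, and the bound-variable arguments
are pairwise distinct. -/
def IsSuperpattern (t : Tm) : Prop :=
  ∀ u, SubtermOf u t → ∀ X τ args, u = appList (Tm.fvar X τ) args →
    (∀ s ∈ args, ArgOK s) ∧
    (∀ (i j : ℕ) (hi : i < args.length) (hj : j < args.length) (si' sj' : Tm),
       IsEtaNF (args[i]'hi) si' → IsEtaNF (args[j]'hj) sj' →
       (∃ a, si' = Tm.bvar a) → si' = sj' → i = j)

/-- The class `Λ` of all (simply-typed) λ-terms. -/
def ΛAll : Tm → Prop := fun _ => True

/-- `g` is an `L`-generalization of `s = λx,y.f(x)` and `t = λx,y.f(y)`. -/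
def Gen (L : Tm → Prop) (g : Tm) : Prop :=
  L g ∧ HasType [] g ty2 ∧
  ∃ σ₁ σ₂ : Subst, AbeEq (σ₁.apply g) sTerm ∧ AbeEq (σ₂.apply g) tTerm

/-- The instantiation quasi-order `g ≤ g'` : `gσ =_{αβη} g'` for some `σ`.
(The same relation defines `≤_Λ` and `≤_{Λ_sp}`.) -/
def LeGen (g g' : Tm) : Prop := ∃ σ : Subst, AbeEq (σ.apply g) g'

/-- `C` is a complete set of `L`-generalizations of `s` and `t`. -/
def CompleteSet (L : Tm → Prop) (C : Set Tm) : Prop :=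
  (∀ g ∈ C, Gen L g) ∧ ∀ g', Gen L g' → ∃ g ∈ C, LeGen g' g

def zVar : ℕ := 0

/-- The pattern generalization `λx:α.λy:α. f(Z(x,y))` with `Z : α → α → α`. -/
def patternG : Tm :=
  Tm.lam Ty.base (Tm.lam Ty.base
    (Tm.app fC (Tm.app (Tm.app (Tm.fvar zVar ty2) (Tm.bvar 1)) (Tm.bvar 0))))

/-- `L`-pattern-derived generalizations: `λx.λy.f(Z(x,y)) ≤_L g`. -/
def PatternDerived (L : Tm → Prop) (g : Tm) : Prop := Gen L g ∧ LeGen patternG g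

/-- `(σ₁,σ₂) ∈ GS_gnd(s,t,g)` : generalizing substitutions with ground ranges. -/
def GSgnd (g : Tm) (σ₁ σ₂ : Subst) : Prop :=
  AbeEq (σ₁.apply g) sTerm ∧ AbeEq (σ₂.apply g) tTerm ∧ σ₁.Ground ∧ σ₂.Ground

/-- `subst1 n τ u` is the substitution `{(n:τ) ↦ u}` (as a syntactic map). -/
def subst1 (n : ℕ) (τ : Ty) (u : Tm) : Tm → Tm
  | Tm.bvar i => Tm.bvar i
  | Tm.fvar m ρ => if m = n ∧ ρ = τ then u else Tm.fvar m ρ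
  | Tm.const m ρ => Tm.const m ρ
  | Tm.lam ρ t => Tm.lam ρ (subst1 n τ u t)
  | Tm.app a b => Tm.app (subst1 n τ u a) (subst1 n τ u b)

/-- The two conditions of Definition `patternDerived` (`L`-tightness): no free
variable `W` of `g` can be eliminated by a projection, nor by substituting its
image under a pair of ground generalizing substitutions, while remaining a
generalization. -/
def TightCond (L : Tm → Prop) (g : Tm) : Prop :=
  ∀ W τ, occFV W τ g ≠ 0 →
    (∀ (γs : List Ty) (i : ℕ) (hi : i < γs.length),
        τ = mkArrow γs (γs[i]'hi) →
        ¬ Gen L (subst1 W τ (mkLams γs (Tm.bvar (γs.length - 1 - i))) g)) ∧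
    (∀ σ₁ σ₂ : Subst, GSgnd g σ₁ σ₂ →
        ¬ Gen L (subst1 W τ (σ₁.map W τ) g) ∧ ¬ Gen L (subst1 W τ (σ₂.map W τ) g))

/-- `L`-tight generalizations. -/
def IsTight (L : Tm → Prop) (g : Tm) : Prop := PatternDerived L g ∧ TightCond L g

/-- The projections `λw₁.λw₂.w₁` and `λw₁.λw₂.w₂` of type `α → α → α`. -/
def proj1 : Tm := Tm.lam Ty.base (Tm.lam Ty.base (Tm.bvar 1))
def proj2 : Tm := Tm.lam Ty.base (Tm.lam Ty.base (Tm.bvar 0))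

theorem proj1_wt : HasType [] proj1 ty2 :=
  HasType.lam (HasType.lam (HasType.bvar rfl))
theorem proj2_wt : HasType [] proj2 ty2 :=
  HasType.lam (HasType.lam (HasType.bvar rfl))

/-- `λb₁…bₘ. Y (r₁ b₁ … bₘ) (r₂ b₁ … bₘ)` with `Y : α → α → α`. -/
def pseudoBody (Y : ℕ) (δs : List Ty) (r₁ r₂ : Tm) : Tm :=
  mkLams δs (Tm.app (Tm.app (Tm.fvar Y ty2) (appBVars (shift δs.length 0 r₁) δs.length))
                    (appBVars (shift δs.length 0 r₂) δs.length))

/-- The shape `λx:α.λy:α. f(Z(s₁,…,sₘ))` of a `Λ`-tight generalization, where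
`Z : δ₁ → ⋯ → δₘ → α`. -/
def tightForm (z : ℕ) (δs : List Ty) (args : List Tm) : Tm :=
  Tm.lam Ty.base (Tm.lam Ty.base
    (Tm.app fC (appList (Tm.fvar z (mkArrow δs Ty.base)) args)))

/-- The argument of `f` in the `(g,Λ)`-pseudo-pattern `G_Λ(g,Z,Y,σ₁,σ₂)`. -/
def pseudoArg (z Y : ℕ) (δs : List Ty) (args : List Tm) (r₁ r₂ : Tm) : Tm :=
  subst1 z (mkArrow δs Ty.base) (pseudoBody Y δs r₁ r₂)
    (appList (Tm.fvar z (mkArrow δs Ty.base)) args)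

/-- The `(g,Λ)`-pseudo-pattern `G_Λ(g,Z,Y,σ₁,σ₂) = g{Z ↦ λb̄. Y(r₁ b̄, r₂ b̄)}`. -/
def pseudoPat (z Y : ℕ) (δs : List Ty) (args : List Tm) (r₁ r₂ : Tm) : Tm :=
  Tm.lam Ty.base (Tm.lam Ty.base (Tm.app fC (pseudoArg z Y δs args r₁ r₂)))

/-- Subterm at a (binary-tree) position. -/
def subAt : Tm → List ℕ → Option Tm
  | t, [] => some t
  | Tm.lam _ t, 0 :: p => subAt t p
  | Tm.app a _, 0 :: p => subAt a p
  | Tm.app _ b, 1 :: p => subAt b p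
  | _, _ => none

/-- Replace the subterm at a position (identity on invalid positions). -/
def replaceAt : Tm → List ℕ → Tm → Tm
  | _, [], u => u
  | Tm.lam τ t, 0 :: p, u => Tm.lam τ (replaceAt t p u)
  | Tm.app a b, 0 :: p, u => Tm.app (replaceAt a p u) b
  | Tm.app a b, 1 :: p, u => Tm.app a (replaceAt b p u)
  | t, _, _ => t

def inferTy : List Ty → Tm → Option Ty
  | Γ, Tm.bvar i => Γ[i]?
  | _, Tm.fvar _ τ => some τ
  | _, Tm.const _ τ => some τ
  | Γ, Tm.lam τ t => (inferTy (τ :: Γ) t).map (Ty.arr τ)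
  | Γ, Tm.app a b =>
      match inferTy Γ a, inferTy Γ b with
      | some (Ty.arr τ ρ), some τ' => if τ = τ' then some ρ else none
      | _, _ => none

/-- `(Σ,w̄)`-representative positions: the η-normal form of the subterm is
headed by a constant of `Σ` or an abstraction. -/
def RepPos (r : Tm) (q : List ℕ) : Prop :=
  ∃ u u', subAt r q = some u ∧ IsEtaNF u u' ∧
    ((∃ τ, headOf u' = Head.lam τ) ∨ (∃ n τ, headOf u' = Head.const n τ))

/-- `(Σ,w̄)`-maximal positions: representative, with no representative
position strictly above. -/
def MaxPos (r : Tm) (q : List ℕ) : Prop :=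
  RepPos r q ∧ ∀ p, p <+: q → p ≠ q → ¬ RepPos r p

/-- The term `H(x,y)` replacing a maximal subterm of `r` during lifting, where
`H : α → α → ν_q` and `ν_q` is the type of the subterm of `r` at `q`. -/
def liftReplacement (r : Tm) (q : List ℕ) (H : ℕ) : Tm :=
  Tm.app (Tm.app (Tm.fvar H (Ty.arr Ty.base (Ty.arr Ty.base
    ((inferTy [Ty.base, Ty.base] ((subAt r q).getD r)).getD Ty.base)))) (Tm.bvar 1)) (Tm.bvar 0)

/-- `LiftOf avoid r r'` : `r'` is obtained from `r` (the argument of `f`,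
under the binders `x, y`) by replacing the subterm at each `(Σ,w̄)`-maximal
position by `H_q(x,y)` for pairwise distinct fresh free variables `H_q`
(all names `≥ avoid`). -/
def LiftOf (avoid : ℕ) (r r' : Tm) : Prop :=
  ∃ (qs : List (List ℕ)) (names : List ℕ),
    qs.Nodup ∧ names.Nodup ∧ names.length = qs.length ∧
    (∀ n ∈ names, avoid ≤ n) ∧
    (∀ q, q ∈ qs ↔ MaxPos r q) ∧
    r' = (qs.zip names).foldl (fun acc p => replaceAt acc p.1 (liftReplacement r p.1 p.2)) r

/-- `λw₁.λw₂. Y(Y(w₁,w₂),Y(w₁,w₂))`. -/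
def dupTm (Y : ℕ) : Tm :=
  Tm.lam Ty.base (Tm.lam Ty.base
    (Tm.app (Tm.app (Tm.fvar Y ty2)
              (Tm.app (Tm.app (Tm.fvar Y ty2) (Tm.bvar 1)) (Tm.bvar 0)))
            (Tm.app (Tm.app (Tm.fvar Y ty2) (Tm.bvar 1)) (Tm.bvar 0))))

/-- The singleton substitution `{(n:τ) ↦ u}`. -/
def single (n : ℕ) (τ : Ty) (u : Tm) (hu : HasType [] u τ) : Subst :=
  idSubst.update n τ u hu

/-- `λx.λy. f(R(x,y))` (with `R` the free variable `zVar : α → α → α`). -/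
def pat1 : Tm := patternG

/-- `λx.λy. f(R(R(x,y),R(x,y)))`. -/
def pat2 : Tm :=
  Tm.lam Ty.base (Tm.lam Ty.base (Tm.app fC
    (Tm.app (Tm.app (Tm.fvar zVar ty2)
              (Tm.app (Tm.app (Tm.fvar zVar ty2) (Tm.bvar 1)) (Tm.bvar 0)))
            (Tm.app (Tm.app (Tm.fvar zVar ty2) (Tm.bvar 1)) (Tm.bvar 0)))))

-- auxiliary lemmas

theorem headOf_appList (h : Tm) (args : List Tm) :
    headOf (appList h args) = headOf h := by
  induction args generalizing h with
  | nil => rfl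
  | cons a l ih => simpa [appList, headOf] using ih (Tm.app h a)

theorem appList_concat (h : Tm) (l : List Tm) (a : Tm) :
    appList h (l ++ [a]) = Tm.app (appList h l) a := by
  simp [appList]

theorem appList_eq_app {X : ℕ} {τ : Ty} {p q : Tm} {args : List Tm}
    (hEq : appList (Tm.fvar X τ) args = Tm.app p q) :
    ∃ l, args = l ++ [q] ∧ appList (Tm.fvar X τ) l = p := by
  rcases args.eq_nil_or_concat with rfl | ⟨l, a, rfl⟩
  · exact absurd hEq (by simp [appList])
  · rw [List.concat_eq_append, appList_concat] at hEq
    injection hEq with h1 h2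
    exact ⟨l, by rw [List.concat_eq_append, h2], h1⟩

theorem appList_fvar_eq_fvar {X n : ℕ} {τ ρ : Ty} {args : List Tm}
    (hEq : appList (Tm.fvar X τ) args = Tm.fvar n ρ) : args = [] := by
  rcases args.eq_nil_or_concat with rfl | ⟨l, a, rfl⟩
  · rfl
  · rw [List.concat_eq_append, appList_concat] at hEq; exact absurd hEq (by simp)

theorem etaNF_bvar {i : ℕ} {s' : Tm} (h : IsEtaNF (Tm.bvar i) s') :
    s' = Tm.bvar i := by
  obtain ⟨hr, -⟩ := h
  rcases (Relation.ReflTransGen.cases_head hr) with rfl | ⟨c, hc, -⟩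
  · rfl
  · cases hc

theorem argOK_bvar (i : ℕ) : ArgOK (Tm.bvar i) := by
  intro s' hs'
  exact Or.inl ⟨i, etaNF_bvar hs'⟩

theorem patternG_superpattern : IsSuperpattern patternG := by
  intro u hu X τ args hEq
  -- enumerate subterms
  have hhead : headOf u = Head.fvar X τ := by
    rw [hEq, headOf_appList]; rfl
  unfold patternG at hu
  cases hu with
  | refl => simp [headOf] at hhead
  | lam h1 =>
    cases h1 with
    | refl => simp [headOf] at hhead
    | lam h2 =>
      cases h2 with
      | refl => simp [headOf, fC] at hhead
      | appL h3 =>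
        cases h3 with
        | refl => simp [headOf, fC] at hhead
      | appR h4 =>
        -- u subterm of Z b1 b0
        cases h4 with
        | refl =>
          obtain ⟨l, rfl, hl⟩ := appList_eq_app hEq.symm
          obtain ⟨l', rfl, hl'⟩ := appList_eq_app hl
          have : l' = [] := appList_fvar_eq_fvar hl'
          subst this
          constructor
          · rintro s hs
            simp [appList] at hs
            rcases hs with rfl | rfl
            · exact argOK_bvar 1
            · exact argOK_bvar 0
          · intro i j hi hj si' sj' hsi hsj hb hss
            simp [appList] at hi hj
            interval_cases i <;> interval_cases j <;> first
            | rfl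
            | · exfalso
                have e1 := etaNF_bvar (i := 1) (by simpa using hsi)
                have e2 := etaNF_bvar (i := 0) (by simpa using hsj)
                simp_all
            | · exfalso
                have e1 := etaNF_bvar (i := 0) (by simpa using hsi)
                have e2 := etaNF_bvar (i := 1) (by simpa using hsj)
                simp_all
        | appL h5 =>
          cases h5 with
          | refl =>
            obtain ⟨l, rfl, hl⟩ := appList_eq_app hEq.symm
            have : l = [] := appList_fvar_eq_fvar hl
            subst this
            constructor
            · rintro s hs
              simp [appList] at hs
              subst hs; exact argOK_bvar 1
            · intro i j hi hj si' sj' _ _ _ _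
              simp [appList] at hi hj
              omega
          | appL h6 =>
            cases h6 with
            | refl =>
              have : args = [] := appList_fvar_eq_fvar hEq.symm
              subst this
              exact ⟨by simp, by intro i j hi; simp at hi⟩
          | appR h6 =>
            cases h6 with
            | refl => simp [headOf] at hhead
        | appR h5 =>
          cases h5 with
          | refl => simp [headOf] at hhead

theorem patternG_wt : HasType [] patternG ty2 := by
  refine HasType.lam (HasType.lam (HasType.app HasType.const ?_))
  exact HasType.app (HasType.app HasType.fvar (HasType.bvar rfl)) (HasType.bvar rfl)

theorem proj1_reduce :
    AbeEq (Tm.app (Tm.app proj1 (Tm.bvar 1)) (Tm.bvar 0)) (Tm.bvar 1) := by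
  have b1 : AbeEq (Tm.app proj1 (Tm.bvar 1)) (Tm.lam Ty.base (Tm.bvar 2)) :=
    AbeEq.beta _ _ _
  exact AbeEq.trans (AbeEq.app b1 (AbeEq.refl _)) (AbeEq.beta _ _ _)

theorem proj2_reduce :
    AbeEq (Tm.app (Tm.app proj2 (Tm.bvar 1)) (Tm.bvar 0)) (Tm.bvar 0) := by
  have b1 : AbeEq (Tm.app proj2 (Tm.bvar 1)) (Tm.lam Ty.base (Tm.bvar 0)) :=
    AbeEq.beta _ _ _
  exact AbeEq.trans (AbeEq.app b1 (AbeEq.refl _)) (AbeEq.beta _ _ _)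

theorem patternG_gen (L : Tm → Prop) (hL : L = ΛAll ∨ L = IsSuperpattern) :
    Gen L patternG := by
  refine ⟨?_, patternG_wt, single zVar ty2 proj1 proj1_wt,
          single zVar ty2 proj2 proj2_wt, ?_, ?_⟩
  · rcases hL with rfl | rfl
    · trivial
    · exact patternG_superpattern
  · show AbeEq (Tm.lam Ty.base (Tm.lam Ty.base
      (Tm.app fC (Tm.app (Tm.app proj1 (Tm.bvar 1)) (Tm.bvar 0))))) sTerm
    exact AbeEq.lam (AbeEq.lam (AbeEq.app (AbeEq.refl fC) proj1_reduce))
  · show AbeEq (Tm.lam Ty.base (Tm.lam Ty.base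
      (Tm.app fC (Tm.app (Tm.app proj2 (Tm.bvar 1)) (Tm.bvar 0))))) tTerm
    exact AbeEq.lam (AbeEq.lam (AbeEq.app (AbeEq.refl fC) proj2_reduce))

/-- Lemma canonForm: every complete set `C ⊆ G_L(s,t)` contains
an `L`-pattern-derived generalization, i.e. some `g ∈ C` with
`λx.λy.f(Z(x,y)) ≤_L g`. -/
theorem complete_set_contains_pattern_derived
    (L : Tm → Prop) (hL : L = ΛAll ∨ L = IsSuperpattern)
    (C : Set Tm) (hC : CompleteSet L C) :
    ∃ g ∈ C, PatternDerived L g := by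
  obtain ⟨g, hgC, hle⟩ := hC.2 patternG (patternG_gen L hL)
  exact ⟨g, hgC, hC.1 g hgC, hle⟩


end AU
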